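/- arXiv:1703.07446 — 3 statements merged into one kernel-verified Lean document; each statement's English description precedes it below -/
import Mathlib

section
/- Let n ≥ 2, let Ω ⊆ ℝⁿ be open, and let a : (0,∞) → (0,∞) be continuously differentiable. Then for every u ∈ C³(Ω) and every x ∈ Ω with ∇u(x) ≠ 0, the following pointwise identity holds at x: (div(a(|∇u|)∇u))² = Σ_{j=1}^n ∂_{x_j}( a(|∇u|)² u_{x_j} Δu ) − Σ_{i,j=1}^n ∂_{x_i}( a(|∇u|)² u_{x_j} u_{x_i x_j} ) + 2 a(|∇u|) a'(|∇u|) Σ_{i,j=1}^n (|∇u|)_{x_i} u_{x_j} u_{x_i x_j} + a(|∇u|)² |∇²u|² + a'(|∇u|)² ( ∇|∇u| · ∇u )². -/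
noncomputable section

open Finset

/-- The `i`-th standard basis vector of `ℝⁿ`. -/
def stdBasis (n : ℕ) (i : Fin n) : EuclideanSpace ℝ (Fin n) :=
  EuclideanSpace.single i 1

/-- The `i`-th partial derivative of `f` at `x`. -/
def pd {n : ℕ} (f : EuclideanSpace ℝ (Fin n) → ℝ) (i : Fin n)
    (x : EuclideanSpace ℝ (Fin n)) : ℝ :=
  fderiv ℝ f x (stdBasis n i)

/-- The Euclidean norm of the gradient of `u` at `x`. -/
def gradNorm {n : ℕ} (u : EuclideanSpace ℝ (Fin n) → ℝ)
    (x : EuclideanSpace ℝ (Fin n)) : ℝ :=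
  Real.sqrt (∑ j, (pd u j x) ^ 2)

/-- The `(i,j)` entry `u_{x_i x_j}` of the Hessian of `u` at `x`. -/
def hess {n : ℕ} (u : EuclideanSpace ℝ (Fin n) → ℝ) (i j : Fin n)
    (x : EuclideanSpace ℝ (Fin n)) : ℝ :=
  pd (pd u j) i x

/-- The Laplacian of `u` at `x`. -/
def lap {n : ℕ} (u : EuclideanSpace ℝ (Fin n) → ℝ)
    (x : EuclideanSpace ℝ (Fin n)) : ℝ :=
  ∑ i, hess u i i x

/-!
With the weight `A = a(|∇u|)`, the product rule expands both divergences on the right into first-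
and second-order terms plus the third-order terms `A² ∇u · ∇Δu` and `A² ∑ᵢⱼ u_{xⱼ} ∂ᵢ u_{xᵢxⱼ}`.
These coincide because third derivatives of a `C³` function commute, and what remains is the
square of `div(A∇u) = ∇A · ∇u + A Δu` rearranged. The chain rule `∇A = a'(|∇u|) ∇|∇u|` applies
because `|∇u| > 0` where `∇u ≠ 0`, and `a` is `C¹` there.
-/

section PartialDerivatives

variable {n : ℕ} {x : EuclideanSpace ℝ (Fin n)}

lemma pd_congr {f g : EuclideanSpace ℝ (Fin n) → ℝ} (h : f =ᶠ[nhds x] g) (i : Fin n) :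
    pd f i x = pd g i x := by
  rw [pd, pd, h.fderiv_eq]

lemma pd_mul {f g : EuclideanSpace ℝ (Fin n) → ℝ} (hf : DifferentiableAt ℝ f x)
    (hg : DifferentiableAt ℝ g x) (i : Fin n) :
    pd (fun y => f y * g y) i x = pd f i x * g x + f x * pd g i x := by
  simp only [pd, fderiv_fun_mul hf hg, add_apply, smul_apply, smul_eq_mul]
  ring

lemma pd_mul_mul {f g h : EuclideanSpace ℝ (Fin n) → ℝ} (hf : DifferentiableAt ℝ f x)
    (hg : DifferentiableAt ℝ g x) (hh : DifferentiableAt ℝ h x) (i : Fin n) :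
    pd (fun y => f y * g y * h y) i x =
      pd f i x * g x * h x + f x * pd g i x * h x + f x * g x * pd h i x := by
  rw [pd_mul (f := fun y => f y * g y) (hf.mul hg) hh, pd_mul hf hg]
  ring

lemma pd_sq {f : EuclideanSpace ℝ (Fin n) → ℝ} (hf : DifferentiableAt ℝ f x) (i : Fin n) :
    pd (fun y => f y ^ 2) i x = 2 * f x * pd f i x := by
  simp only [sq]
  rw [pd_mul hf hf]
  ring

lemma pd_sum {ι : Type*} {s : Finset ι} {f : ι → EuclideanSpace ℝ (Fin n) → ℝ}
    (h : ∀ i ∈ s, DifferentiableAt ℝ (f i) x) (j : Fin n) :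
    pd (fun y => ∑ i ∈ s, f i y) j x = ∑ i ∈ s, pd (f i) j x := by
  simp [pd, fderiv_fun_sum h]

lemma pd_comp {g : EuclideanSpace ℝ (Fin n) → ℝ} {a : ℝ → ℝ} (hg : DifferentiableAt ℝ g x)
    (ha : DifferentiableAt ℝ a (g x)) (i : Fin n) :
    pd (fun y => a (g y)) i x = deriv a (g x) * pd g i x := by
  rw [pd, pd, show (fun y => a (g y)) = a ∘ g from rfl,
    (ha.hasDerivAt.comp_hasFDerivAt x hg.hasFDerivAt).fderiv]
  rfl

lemma contDiffAt_pd {f : EuclideanSpace ℝ (Fin n) → ℝ} {m k : WithTop ℕ∞}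
    (hf : ContDiffAt ℝ k f x) (h : m + 1 ≤ k) (j : Fin n) : ContDiffAt ℝ m (pd f j) x :=
  (hf.fderiv_right h).clm_apply contDiffAt_const

lemma hess_eq_fderiv_fderiv {f : EuclideanSpace ℝ (Fin n) → ℝ}
    (hf : DifferentiableAt ℝ (fderiv ℝ f) x) (p q : Fin n) :
    hess f p q x = fderiv ℝ (fderiv ℝ f) x (stdBasis n p) (stdBasis n q) := by
  have h := fderiv_clm_apply (c := fderiv ℝ f) (u := fun _ => stdBasis n q) hf
    (differentiableAt_const _)
  simp only [fderiv_fun_const, Pi.zero_apply, ContinuousLinearMap.comp_zero, zero_add] at h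
  change fderiv ℝ (fun z => fderiv ℝ f z (stdBasis n q)) x (stdBasis n p) = _
  rw [h]
  rfl

lemma hess_comm {f : EuclideanSpace ℝ (Fin n) → ℝ} (hf : ContDiffAt ℝ 2 f x) (p q : Fin n) :
    hess f p q x = hess f q p x := by
  have hdf : DifferentiableAt ℝ (fderiv ℝ f) x :=
    (hf.fderiv_right (m := 1) (by norm_num)).differentiableAt one_ne_zero
  rw [hess_eq_fderiv_fderiv hdf, hess_eq_fderiv_fderiv hdf]
  exact hf.isSymmSndFDerivAt (by simp) _ _

end PartialDerivatives

section ThirdOrder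

variable {n : ℕ} {u : EuclideanSpace ℝ (Fin n) → ℝ} {x : EuclideanSpace ℝ (Fin n)}

lemma differentiableAt_hess (hu : ContDiffAt ℝ 3 u x) (i j : Fin n) :
    DifferentiableAt ℝ (hess u i j) x :=
  (contDiffAt_pd (contDiffAt_pd hu (m := 2) (by norm_num) j) (m := 1) (by norm_num) i)
    |>.differentiableAt one_ne_zero

/-- Trading `u_{x_j x_i}` for `u_{x_i x_j}` under a derivative needs their equality near `x`. -/
lemma pd_hess_diag (hu : ContDiffAt ℝ 3 u x) (i j : Fin n) :
    pd (hess u i i) j x = pd (hess u i j) i x :=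
  calc pd (hess u i i) j x
      = hess (pd u i) j i x := rfl
    _ = hess (pd u i) i j x := hess_comm (contDiffAt_pd hu (by norm_num) i) j i
    _ = pd (hess u j i) i x := rfl
    _ = pd (hess u i j) i x := pd_congr
          ((hu.eventually (by simp)).mono fun _ hy => hess_comm (hy.of_le (by norm_num)) j i) i

lemma pd_lap (hu : ContDiffAt ℝ 3 u x) (j : Fin n) :
    pd (lap u) j x = ∑ i, pd (hess u i i) j x :=
  pd_sum (f := fun i => hess u i i) (fun i _ => differentiableAt_hess hu i i) j

lemma sum_pd_mul_pd_lap (hu : ContDiffAt ℝ 3 u x) :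
    ∑ j, pd u j x * pd (lap u) j x = ∑ i, ∑ j, pd u j x * pd (hess u i j) i x := by
  simp only [pd_lap hu, mul_sum, pd_hess_diag hu]
  exact sum_comm

end ThirdOrder

section Divergence

variable {n : ℕ} {u A : EuclideanSpace ℝ (Fin n) → ℝ} {x : EuclideanSpace ℝ (Fin n)}

lemma sum_pd_mul_pd (hA : DifferentiableAt ℝ A x) (hu : ∀ j, DifferentiableAt ℝ (pd u j) x) :
    ∑ j, pd (fun y => A y * pd u j y) j x = ∑ j, pd A j x * pd u j x + A x * lap u x := by
  rw [lap, mul_sum, ← sum_add_distrib]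
  exact sum_congr rfl fun j _ => pd_mul hA (hu j) j

theorem sq_sum_pd_weight_mul_pd (hA : DifferentiableAt ℝ A x) (hu : ContDiffAt ℝ 3 u x) :
    (∑ j, pd (fun y => A y * pd u j y) j x) ^ 2 =
      (∑ j, pd (fun y => A y ^ 2 * pd u j y * lap u y) j x)
      - (∑ i, ∑ j, pd (fun y => A y ^ 2 * pd u j y * hess u i j y) i x)
      + 2 * A x * ∑ i, ∑ j, pd A i x * pd u j x * hess u i j x
      + A x ^ 2 * (∑ i, ∑ j, hess u i j x ^ 2)
      + (∑ i, pd A i x * pd u i x) ^ 2 := by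
  have hpdu (j : Fin n) : DifferentiableAt ℝ (pd u j) x :=
    (contDiffAt_pd hu (m := 2) (by norm_num) j).differentiableAt two_ne_zero
  have hlap : DifferentiableAt ℝ (lap u) x :=
    DifferentiableAt.fun_sum fun i _ => differentiableAt_hess hu i i
  have hA2 : DifferentiableAt ℝ (fun y => A y ^ 2) x := hA.pow 2
  have div_lap : ∑ j, pd (fun y => A y ^ 2 * pd u j y * lap u y) j x =
      2 * A x * lap u x * ∑ j, pd A j x * pd u j x + A x ^ 2 * lap u x * ∑ j, hess u j j x
        + A x ^ 2 * ∑ j, pd u j x * pd (lap u) j x := by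
    simp only [mul_sum, ← sum_add_distrib]
    refine sum_congr rfl fun j _ => ?_
    rw [pd_mul_mul hA2 (hpdu j) hlap, pd_sq hA, hess]
    ring
  have div_hess : ∑ i, ∑ j, pd (fun y => A y ^ 2 * pd u j y * hess u i j y) i x =
      2 * A x * ∑ i, ∑ j, pd A i x * pd u j x * hess u i j x
        + A x ^ 2 * ∑ i, ∑ j, hess u i j x ^ 2
        + A x ^ 2 * ∑ i, ∑ j, pd u j x * pd (hess u i j) i x := by
    simp only [mul_sum, ← sum_add_distrib]
    refine sum_congr rfl fun i _ => sum_congr rfl fun j _ => ?_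
    rw [pd_mul_mul hA2 (hpdu j) (differentiableAt_hess hu i j), pd_sq hA, hess]
    ring
  rw [sum_pd_mul_pd hA hpdu, div_lap, div_hess, sum_pd_mul_pd_lap hu, lap]
  ring

end Divergence

section GradNorm

variable {n : ℕ} {u : EuclideanSpace ℝ (Fin n) → ℝ} {x : EuclideanSpace ℝ (Fin n)}

lemma sum_sq_pd_pos (hgrad : (fun j => pd u j x) ≠ 0) : 0 < ∑ j, pd u j x ^ 2 := by
  obtain ⟨j, hj⟩ := Function.ne_iff.1 hgrad
  exact sum_pos' (fun _ _ => sq_nonneg _) ⟨j, mem_univ _, sq_pos_of_ne_zero hj⟩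

lemma differentiableAt_gradNorm (hu : ContDiffAt ℝ 2 u x) (hgrad : (fun j => pd u j x) ≠ 0) :
    DifferentiableAt ℝ (gradNorm u) x :=
  DifferentiableAt.sqrt (DifferentiableAt.fun_sum fun j _ =>
    ((contDiffAt_pd hu (m := 1) (by norm_num) j).differentiableAt one_ne_zero).pow 2)
    (sum_sq_pd_pos hgrad).ne'

end GradNorm

theorem pointwise_identity_general
    (n : ℕ)
    (a : ℝ → ℝ) (ha : ContDiffOn ℝ 1 a (Set.Ioi 0))
    (Ω : Set (EuclideanSpace ℝ (Fin n))) (hΩ : IsOpen Ω)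
    (u : EuclideanSpace ℝ (Fin n) → ℝ) (hu : ContDiffOn ℝ 3 u Ω)
    (x : EuclideanSpace ℝ (Fin n)) (hx : x ∈ Ω) (hgrad : (fun j => pd u j x) ≠ 0) :
    (∑ j, pd (fun y => a (gradNorm u y) * pd u j y) j x) ^ 2 =
      (∑ j, pd (fun y => (a (gradNorm u y)) ^ 2 * pd u j y * lap u y) j x)
      - (∑ i, ∑ j, pd (fun y => (a (gradNorm u y)) ^ 2 * pd u j y * hess u i j y) i x)
      + 2 * a (gradNorm u x) * deriv a (gradNorm u x)
          * ∑ i, ∑ j, pd (gradNorm u) i x * pd u j x * hess u i j x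
      + (a (gradNorm u x)) ^ 2 * (∑ i, ∑ j, (hess u i j x) ^ 2)
      + (deriv a (gradNorm u x)) ^ 2 * (∑ i, pd (gradNorm u) i x * pd u i x) ^ 2 := by
  have hux : ContDiffAt ℝ 3 u x := hu.contDiffAt (hΩ.mem_nhds hx)
  have hg : DifferentiableAt ℝ (gradNorm u) x :=
    differentiableAt_gradNorm (hux.of_le (by norm_num)) hgrad
  have hgpos : 0 < gradNorm u x := Real.sqrt_pos.2 (sum_sq_pd_pos hgrad)
  have hax : DifferentiableAt ℝ a (gradNorm u x) :=
    (ha.contDiffAt (Ioi_mem_nhds hgpos)).differentiableAt one_ne_zero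
  have hpdA := pd_comp hg hax
  rw [sq_sum_pd_weight_mul_pd (A := fun y => a (gradNorm u y)) (hax.comp x hg) hux]
  have hmixed : ∑ i, ∑ j, pd (fun y => a (gradNorm u y)) i x * pd u j x * hess u i j x =
      deriv a (gradNorm u x) * ∑ i, ∑ j, pd (gradNorm u) i x * pd u j x * hess u i j x := by
    simp only [hpdA, mul_sum, mul_assoc]
  have hradial : ∑ i, pd (fun y => a (gradNorm u y)) i x * pd u i x =
      deriv a (gradNorm u x) * ∑ i, pd (gradNorm u) i x * pd u i x := by
    simp only [hpdA, mul_sum, mul_assoc]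
  rw [hmixed, hradial]
  ring

/-- The pointwise identity
`(div(a(|∇u|)∇u))² = ∑ⱼ ∂ⱼ(a(|∇u|)² u_{xⱼ} Δu) − ∑ᵢⱼ ∂ᵢ(a(|∇u|)² u_{xⱼ} u_{xᵢxⱼ})
  + 2 a a' ∑ᵢⱼ (|∇u|)_{xᵢ} u_{xⱼ} u_{xᵢxⱼ} + a² |∇²u|² + a'² (∇|∇u| ⬝ ∇u)²`
at points where `∇u ≠ 0`. -/
theorem pointwise_identity
    (n : ℕ) (hn : 2 ≤ n)
    (a : ℝ → ℝ) (ha : ContDiffOn ℝ 1 a (Set.Ioi 0)) (hapos : ∀ t : ℝ, 0 < t → 0 < a t)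
    (Ω : Set (EuclideanSpace ℝ (Fin n))) (hΩ : IsOpen Ω)
    (u : EuclideanSpace ℝ (Fin n) → ℝ) (hu : ContDiffOn ℝ 3 u Ω)
    (x : EuclideanSpace ℝ (Fin n)) (hx : x ∈ Ω) (hgrad : (fun j => pd u j x) ≠ 0) :
    (∑ j, pd (fun y => a (gradNorm u y) * pd u j y) j x) ^ 2 =
      (∑ j, pd (fun y => (a (gradNorm u y)) ^ 2 * pd u j y * lap u y) j x)
      - (∑ i, ∑ j, pd (fun y => (a (gradNorm u y)) ^ 2 * pd u j y * hess u i j y) i x)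
      + 2 * a (gradNorm u x) * deriv a (gradNorm u x)
          * ∑ i, ∑ j, pd (gradNorm u) i x * pd u j x * hess u i j x
      + (a (gradNorm u x)) ^ 2 * (∑ i, ∑ j, (hess u i j x) ^ 2)
      + (deriv a (gradNorm u x)) ^ 2 * (∑ i, pd (gradNorm u) i x * pd u i x) ^ 2 :=
  pointwise_identity_general n a ha Ω hΩ u hu x hx hgrad
end
end

section
/- Let n ≥ 1 and define φ : ℝⁿ → ℝ by φ(η) = Σ_{i=1}^n ηᵢ² Π_{j ≠ i} (1 − 2ηⱼ) + Π_{j=1}^n (1 − 2ηⱼ). Then the minimum of φ over the set A = { η ∈ ℝⁿ : ηᵢ ≥ 0 for all i, Σ_{i=1}^n ηᵢ ≤ 1 } equals 0; in particular φ ≥ 0 on A, and φ(e_i) = 0 for each standard basis vector e_i of ℝⁿ. -/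
open Finset

def phi (n : ℕ) (η : Fin n → ℝ) : ℝ :=
  ∑ i, (η i) ^ 2 * ∏ j ∈ Finset.univ.erase i, (1 - 2 * η j)
    + ∏ j, (1 - 2 * η j)

/-- Weierstrass product inequality. -/
lemma weier {ι : Type*} (s : Finset ι) (f : ι → ℝ) (h0 : ∀ i ∈ s, 0 ≤ f i)
    (h1 : ∀ i ∈ s, f i ≤ 1) : 1 - ∑ i ∈ s, f i ≤ ∏ i ∈ s, (1 - f i) := by
  classical
  induction s using Finset.induction with
  | empty => simp
  | @insert a t hat ih =>
    rw [Finset.sum_insert hat, Finset.prod_insert hat]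
    have h0a := h0 a (mem_insert_self a t)
    have h1a := h1 a (mem_insert_self a t)
    have ih' := ih (fun i hi => h0 i (mem_insert_of_mem hi))
      (fun i hi => h1 i (mem_insert_of_mem hi))
    have hsum : ∑ i ∈ t, f i ≥ 0 :=
      Finset.sum_nonneg fun i hi => h0 i (mem_insert_of_mem hi)
    nlinarith [ih', hsum]

lemma phi_nonneg (n : ℕ) (η : Fin n → ℝ) (h0 : ∀ i, 0 ≤ η i)
    (hs : ∑ i, η i ≤ 1) : 0 ≤ phi n η := by
  classical
  by_cases hhalf : ∀ j, η j ≤ 1/2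
  · -- all factors nonneg
    unfold phi
    have hfac : ∀ j : Fin n, (0:ℝ) ≤ 1 - 2 * η j := fun j => by
      have := hhalf j; linarith
    have h1 : 0 ≤ ∑ i, (η i) ^ 2 * ∏ j ∈ Finset.univ.erase i, (1 - 2 * η j) :=
      Finset.sum_nonneg fun i _ => mul_nonneg (sq_nonneg _)
        (Finset.prod_nonneg fun j _ => hfac j)
    have h2 : 0 ≤ ∏ j, (1 - 2 * η j) := Finset.prod_nonneg fun j _ => hfac j
    linarith
  · push_neg at hhalf
    obtain ⟨k, hk⟩ := hhalf
    set s' : ℝ := ∑ i ∈ Finset.univ.erase k, η i with hs'def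
    have hsplit : η k + s' = ∑ i, η i := Finset.add_sum_erase _ _ (mem_univ k)
    have hs'0 : 0 ≤ s' := Finset.sum_nonneg fun i _ => h0 i
    have hkey : s' ≤ 1 - η k := by linarith
    have hle : ∀ j ∈ Finset.univ.erase k, η j ≤ s' := fun j hj =>
      Finset.single_le_sum (fun i _ => h0 i) hj
    have hjhalf : ∀ j ∈ Finset.univ.erase k, η j ≤ 1/2 := fun j hj => by
      have := hle j hj; linarith
    -- Pk
    set Pk : ℝ := ∏ j ∈ Finset.univ.erase k, (1 - 2 * η j) with hPkdef
    have hPk : 1 - 2 * s' ≤ Pk := by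
      have := weier (Finset.univ.erase k) (fun j => 2 * η j)
        (fun j hj => by have := h0 j; linarith)
        (fun j hj => by have := hjhalf j hj; linarith)
      simpa [← Finset.mul_sum, hs'def] using this
    -- rewrite the big product
    have e2 : ∏ j, (1 - 2 * η j) = (1 - 2 * η k) * Pk :=
      (Finset.mul_prod_erase _ _ (mem_univ k)).symm
    -- rewrite the sum
    have e1 : ∑ i, (η i) ^ 2 * ∏ j ∈ Finset.univ.erase i, (1 - 2 * η j)
        = η k ^ 2 * Pk + (1 - 2 * η k) *
          ∑ i ∈ Finset.univ.erase k, (η i) ^ 2 *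
            ∏ j ∈ (Finset.univ.erase i).erase k, (1 - 2 * η j) := by
      rw [← Finset.add_sum_erase _ _ (mem_univ k), Finset.mul_sum]
      congr 1
      apply Finset.sum_congr rfl
      intro i hi
      have hik : k ∈ Finset.univ.erase i := by
        simp [Finset.mem_erase] at hi ⊢
        exact fun h => hi h.symm
      rw [← Finset.mul_prod_erase _ _ hik]
      ring
    set S : ℝ := ∑ i ∈ Finset.univ.erase k, (η i) ^ 2 *
      ∏ j ∈ (Finset.univ.erase i).erase k, (1 - 2 * η j) with hSdef
    have hSbound : S ≤ s' * s' := by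
      have : ∀ i ∈ Finset.univ.erase k, (η i) ^ 2 *
          ∏ j ∈ (Finset.univ.erase i).erase k, (1 - 2 * η j) ≤ η i * s' := by
        intro i hi
        have hP1 : ∏ j ∈ (Finset.univ.erase i).erase k, (1 - 2 * η j) ≤ 1 :=
          Finset.prod_le_one
            (fun j hj => by
              have hj' : j ∈ Finset.univ.erase k := by
                simp [Finset.mem_erase] at hj ⊢; exact hj.1
              have := hjhalf j hj'; linarith)
            (fun j hj => by have := h0 j; linarith)
        have hP0 : 0 ≤ ∏ j ∈ (Finset.univ.erase i).erase k, (1 - 2 * η j) :=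
          Finset.prod_nonneg fun j hj => by
            have hj' : j ∈ Finset.univ.erase k := by
              simp [Finset.mem_erase] at hj ⊢; exact hj.1
            have := hjhalf j hj'; linarith
        have hi' := hle i hi
        have h0i := h0 i
        nlinarith
      calc S ≤ ∑ i ∈ Finset.univ.erase k, η i * s' := Finset.sum_le_sum this
        _ = s' * s' := by rw [← Finset.sum_mul]
    have hS0 : 0 ≤ S := Finset.sum_nonneg fun i hi => by
      apply mul_nonneg (sq_nonneg _)
      apply Finset.prod_nonneg
      intro j hj
      have hj' : j ∈ Finset.univ.erase k := by
        simp [Finset.mem_erase] at hj ⊢; exact hj.1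
      have := hjhalf j hj'; linarith
    unfold phi
    rw [e1, e2]
    have c1 : (1 - η k)^2 * (1 - 2*s') ≤ (1 - η k)^2 * Pk :=
      mul_le_mul_of_nonneg_left hPk (sq_nonneg _)
    have c2 : (2*η k - 1) * S ≤ (2*η k - 1) * (s'*s') :=
      mul_le_mul_of_nonneg_left hSbound (by linarith)
    have c3 : 0 ≤ ((1 - η k) - s') * ((1 - η k) + s' - 2*s'*(1 - η k)) := by
      apply mul_nonneg (by linarith)
      nlinarith [mul_nonneg hs'0 (by linarith : (0:ℝ) ≤ η k),
        mul_nonneg (by linarith : (0:ℝ) ≤ 1 - η k) (by nlinarith : (0:ℝ) ≤ 1 - s')]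
    nlinarith [c1, c2, c3]

lemma phi_single (n : ℕ) (i : Fin n) : phi n (Pi.single i (1:ℝ)) = 0 := by
  classical
  unfold phi
  have hsum : ∑ i' : Fin n, (Pi.single i (1:ℝ) i') ^ 2 *
      ∏ j ∈ Finset.univ.erase i', (1 - 2 * Pi.single i (1:ℝ) j) = (1:ℝ) := by
    rw [Finset.sum_eq_single i]
    · have : ∏ j ∈ Finset.univ.erase i, (1 - 2 * Pi.single i (1:ℝ) j) = (1:ℝ) := by
        apply Finset.prod_eq_one
        intro j hj
        have hji : j ≠ i := (Finset.mem_erase.mp hj).1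
        simp [Pi.single_apply, hji]
      simp [this]
    · intro b _ hbi
      simp [Pi.single_apply, hbi]
    · simp
  have hprod : ∏ j, (1 - 2 * Pi.single i (1:ℝ) j) = (-1:ℝ) := by
    rw [← Finset.mul_prod_erase _ _ (mem_univ i)]
    have : ∏ j ∈ Finset.univ.erase i, (1 - 2 * Pi.single i (1:ℝ) j) = (1:ℝ) := by
      apply Finset.prod_eq_one
      intro j hj
      have hji : j ≠ i := (Finset.mem_erase.mp hj).1
      simp [Pi.single_apply, hji]
    rw [this]
    norm_num
  rw [hsum, hprod]
  ring

/-- The minimum of `φ` over the simplex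
`A = {η : ηᵢ ≥ 0, ∑ ηᵢ ≤ 1}` equals `0`; in particular `φ ≥ 0` on `A` and
`φ(eᵢ) = 0` for each standard basis vector `eᵢ`. -/
theorem phi_min_on_simplex (n : ℕ) (hn : 1 ≤ n) :
    IsLeast (phi n '' {η : Fin n → ℝ | (∀ i, 0 ≤ η i) ∧ ∑ i, η i ≤ 1}) 0
      ∧ ∀ i : Fin n, phi n (Pi.single i 1) = 0 := by
  classical
  refine ⟨⟨?_, ?_⟩, fun i => phi_single n i⟩
  · refine ⟨Pi.single ⟨0, hn⟩ 1, ⟨fun j => ?_, ?_⟩, phi_single n _⟩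
    · by_cases h : j = ⟨0, hn⟩ <;> simp [Pi.single_apply, h]
    · simp [Finset.sum_pi_single]
  · rintro x ⟨η, ⟨h0, hs⟩, rfl⟩
    exact phi_nonneg n η h0 hs
end

section
/- Let n ≥ 3 and let η₁, …, ηₙ be nonnegative real numbers with Σ_{i=1}^n ηᵢ ≤ 1. For k = 1, …, n let S_k denote the k-th elementary symmetric polynomial of η₁, …, ηₙ. Then Σ_{k=3}^n (−1)^{k−1} (k−2) 2^{k−2} S_k ≥ 0. -/
/-!
Writing `S_k` for the elementary symmetric polynomials, `∑ₖ S_k x^k = f(x) := ∏ᵢ (1 + x ηᵢ)` and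
`∑ₖ k S_k x^k = x f'(x)`. For `k ≥ 3` the coefficient `(-1)^(k-1) (k-2) 2^(k-2)` is `-(k-2)(-2)^k / 4`,
so the tail sum equals `(P + B + S₁ - 1) / 2` with `P = f(-2) = ∏ᵢ (1 - 2ηᵢ)` and
`B = f'(-2) = ∑ⱼ ηⱼ ∏_{i ≠ j} (1 - 2ηᵢ)`. The inequality `P + B + S₁ ≥ 1` is proved by adding one
variable at a time, together with `P + 2B ≤ 1` and `B ≥ 0`. Since `∑ ηᵢ ≤ 1`, at most one `ηᵢ`
exceeds `1/2`; when all are at most `1/2`, `B ≥ 0` is clear, and otherwise the large variable is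
split off and the Weierstrass product inequality bounds the rest.
-/

open Finset

/-- The `k`-th elementary symmetric polynomial of `η₁, …, ηₙ`. -/
def esym (n : ℕ) (η : Fin n → ℝ) (k : ℕ) : ℝ :=
  ∑ t ∈ Finset.univ.powersetCard k, ∏ i ∈ t, η i

theorem sum_powerset_card_mul_prod {ι R : Type*} [DecidableEq ι] [CommSemiring R]
    (s : Finset ι) (f : ι → R) :
    ∑ t ∈ s.powerset, (#t : R) * ∏ i ∈ t, f i = ∑ j ∈ s, f j * ∏ i ∈ s.erase j, (1 + f i) := by
  induction s using Finset.induction_on with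
  | empty => simp
  | insert a s ha ih =>
    have hcard : ∀ t ∈ s.powerset, (#(insert a t) : R) * ∏ i ∈ insert a t, f i
        = f a * ((#t : R) * ∏ i ∈ t, f i) + f a * ∏ i ∈ t, f i := by
      intro t ht
      have hat : a ∉ t := fun h => ha (mem_powerset.1 ht h)
      rw [card_insert_of_notMem hat, prod_insert hat]
      push_cast
      ring
    have herase : ∀ j ∈ s, f j * ∏ i ∈ (insert a s).erase j, (1 + f i)
        = (1 + f a) * (f j * ∏ i ∈ s.erase j, (1 + f i)) := by
      intro j hj
      have haj : a ≠ j := fun h => ha (h ▸ hj)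
      rw [erase_insert_of_ne haj, prod_insert (fun h => ha (mem_of_mem_erase h))]
      ring
    rw [sum_powerset_insert ha, sum_insert ha, erase_insert ha, sum_congr rfl hcard,
      sum_add_distrib, ← mul_sum, ← mul_sum, ih, ← prod_one_add, sum_congr rfl herase, ← mul_sum]
    ring

theorem one_sub_sum_le_prod_one_sub {ι : Type*} (s : Finset ι) (x : ι → ℝ)
    (h0 : ∀ i ∈ s, 0 ≤ x i) (h1 : ∀ i ∈ s, x i ≤ 1) :
    1 - ∑ i ∈ s, x i ≤ ∏ i ∈ s, (1 - x i) := by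
  classical
  induction s using Finset.induction_on with
  | empty => simp
  | insert a s ha ih =>
    have ih := ih (fun i hi => h0 i (mem_insert_of_mem hi)) (fun i hi => h1 i (mem_insert_of_mem hi))
    have hxa : 0 ≤ 1 - x a := sub_nonneg.2 (h1 a (mem_insert_self a s))
    have hsum : 0 ≤ x a * ∑ i ∈ s, x i :=
      mul_nonneg (h0 a (mem_insert_self a s)) (sum_nonneg fun i hi => h0 i (mem_insert_of_mem hi))
    rw [sum_insert ha, prod_insert ha]
    nlinarith [mul_le_mul_of_nonneg_left ih hxa]

section

variable {ι : Type*} (η : ι → ℝ)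

/-- `f'(-2)` for `f(x) = ∏ i ∈ s, (1 + x ηᵢ)`. -/
noncomputable def leaveOneOutSum [DecidableEq ι] (s : Finset ι) : ℝ :=
  ∑ j ∈ s, η j * ∏ i ∈ s.erase j, (1 - 2 * η i)

theorem leaveOneOutSum_insert [DecidableEq ι] {a : ι} {s : Finset ι} (ha : a ∉ s) :
    leaveOneOutSum η (insert a s)
      = η a * ∏ i ∈ s, (1 - 2 * η i) + (1 - 2 * η a) * leaveOneOutSum η s := by
  rw [leaveOneOutSum, sum_insert ha, erase_insert ha, leaveOneOutSum, mul_sum]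
  congr 1
  refine sum_congr rfl fun j hj => ?_
  have haj : a ≠ j := fun h => ha (h ▸ hj)
  rw [erase_insert_of_ne haj, prod_insert (fun h => ha (mem_of_mem_erase h))]
  ring

variable {η} (hη : ∀ i, 0 ≤ η i)
include hη

theorem one_sub_two_mul_sum_le_prod {s : Finset ι} (hs : ∀ i ∈ s, η i ≤ 1 / 2) :
    1 - 2 * ∑ i ∈ s, η i ≤ ∏ i ∈ s, (1 - 2 * η i) := by
  rw [mul_sum]
  exact one_sub_sum_le_prod_one_sub s (fun i => 2 * η i) (fun i _ => by linarith [hη i])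
    (fun i hi => by linarith [hs i hi])

theorem prod_one_sub_two_mul_mem_Icc {s : Finset ι} (hs : ∀ i ∈ s, η i ≤ 1 / 2) :
    ∏ i ∈ s, (1 - 2 * η i) ∈ Set.Icc 0 1 :=
  ⟨prod_nonneg fun i hi => by linarith [hs i hi],
    prod_le_one (fun i hi => by linarith [hs i hi]) fun i _ => by linarith [hη i]⟩

theorem leaveOneOutSum_mem_Icc_of_le_half [DecidableEq ι] {s : Finset ι}
    (hs : ∀ i ∈ s, η i ≤ 1 / 2) : leaveOneOutSum η s ∈ Set.Icc 0 (∑ i ∈ s, η i) := by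
  have hprod : ∀ j ∈ s, ∏ i ∈ s.erase j, (1 - 2 * η i) ∈ Set.Icc 0 1 := fun j _ =>
    prod_one_sub_two_mul_mem_Icc hη fun i hi => hs i (mem_of_mem_erase hi)
  exact ⟨sum_nonneg fun j hj => mul_nonneg (hη j) (hprod j hj).1,
    sum_le_sum fun j hj => mul_le_of_le_one_right (hη j) (hprod j hj).2⟩

variable [DecidableEq ι]

theorem leaveOneOutSum_nonneg {s : Finset ι} (hs : ∑ i ∈ s, η i ≤ 1) :
    0 ≤ leaveOneOutSum η s := by
  by_cases hbig : ∃ m ∈ s, 1 / 2 < η m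
  · obtain ⟨m, hm, hm_gt⟩ := hbig
    have hsplit : η m + ∑ i ∈ s.erase m, η i = ∑ i ∈ s, η i := add_sum_erase s η hm
    have hrest : ∀ i ∈ s.erase m, η i ≤ 1 / 2 := fun i hi => by
      linarith [single_le_sum (fun j _ => hη j) hi]
    have hP := one_sub_two_mul_sum_le_prod hη hrest
    have hB := (leaveOneOutSum_mem_Icc_of_le_half hη hrest).2
    rw [← insert_erase hm, leaveOneOutSum_insert η (notMem_erase m s)]
    -- `B ≥ ηₘ (2ηₘ - 1) - (2ηₘ - 1)(1 - ηₘ) = (2ηₘ - 1)²`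
    nlinarith
  · push Not at hbig
    exact (leaveOneOutSum_mem_Icc_of_le_half hη hbig).1

theorem prod_add_two_mul_leaveOneOutSum_le_one {s : Finset ι} (hs : ∑ i ∈ s, η i ≤ 1) :
    ∏ i ∈ s, (1 - 2 * η i) + 2 * leaveOneOutSum η s ≤ 1 := by
  induction s using Finset.induction_on with
  | empty => simp [leaveOneOutSum]
  | insert a s ha ih =>
    rw [sum_insert ha] at hs
    have hs' : ∑ i ∈ s, η i ≤ 1 := by linarith [hη a]
    rw [prod_insert ha, leaveOneOutSum_insert η ha]
    nlinarith [ih hs', leaveOneOutSum_nonneg hη hs', hη a]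

theorem one_le_prod_add_leaveOneOutSum_add_sum {s : Finset ι} (hs : ∑ i ∈ s, η i ≤ 1) :
    1 ≤ ∏ i ∈ s, (1 - 2 * η i) + leaveOneOutSum η s + ∑ i ∈ s, η i := by
  induction s using Finset.induction_on with
  | empty => simp [leaveOneOutSum]
  | insert a s ha ih =>
    rw [sum_insert ha] at hs ⊢
    have hs' : ∑ i ∈ s, η i ≤ 1 := by linarith [hη a]
    rw [prod_insert ha, leaveOneOutSum_insert η ha]
    nlinarith [ih hs', prod_add_two_mul_leaveOneOutSum_le_one hη hs', hη a]

end

section esym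

variable {n : ℕ} (η : Fin n → ℝ)

theorem esym_zero : esym n η 0 = 1 := by
  simp [esym]

theorem esym_one : esym n η 1 = ∑ i, η i := by
  simp [esym, powersetCard_one]

theorem sum_range_mul_esym (g : ℕ → ℝ) :
    ∑ k ∈ range (n + 1), g k * esym n η k = ∑ t ∈ univ.powerset, g #t * ∏ i ∈ t, η i := by
  rw [sum_powerset, card_univ, Fintype.card_fin]
  refine sum_congr rfl fun k _ => ?_
  rw [esym, mul_sum]
  exact sum_congr rfl fun t ht => by rw [(mem_powersetCard.1 ht).2]

theorem sum_range_card_sub_two_mul_neg_two_pow_mul_esym :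
    ∑ k ∈ range (n + 1), ((k : ℝ) - 2) * (-2) ^ k * esym n η k
      = -2 * (∏ i, (1 - 2 * η i) + leaveOneOutSum η univ) := by
  have hterm : ∀ t : Finset (Fin n), ((#t : ℝ) - 2) * (-2) ^ #t * ∏ i ∈ t, η i
      = (#t : ℝ) * ∏ i ∈ t, (-2 * η i) - 2 * ∏ i ∈ t, (-2 * η i) := fun t => by
    rw [prod_mul_distrib, prod_const]
    ring
  have hfactor : ∀ s : Finset (Fin n), ∏ i ∈ s, (1 + -2 * η i) = ∏ i ∈ s, (1 - 2 * η i) :=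
    fun s => prod_congr rfl fun i _ => by ring
  rw [sum_range_mul_esym, sum_congr rfl fun t _ => hterm t, sum_sub_distrib, ← mul_sum,
    sum_powerset_card_mul_prod, ← prod_one_add, hfactor, leaveOneOutSum, mul_add, mul_sum]
  simp_rw [hfactor, mul_assoc]
  ring

end esym

/-- For `n ≥ 3` and nonnegative `η₁,…,ηₙ` with `∑ ηᵢ ≤ 1`,
`∑_{k=3}^n (−1)^{k−1} (k−2) 2^{k−2} S_k ≥ 0`. -/
theorem alternating_esym_tail_nonneg (n : ℕ) (hn : 3 ≤ n) (η : Fin n → ℝ)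
    (hη : ∀ i, 0 ≤ η i) (hsum : ∑ i, η i ≤ 1) :
    0 ≤ ∑ k ∈ Finset.Icc 3 n, (-1 : ℝ) ^ (k - 1) * ((k : ℝ) - 2) * 2 ^ (k - 2) * esym n η k := by
  have hcoef : ∀ k ∈ Icc 3 n, (-1 : ℝ) ^ (k - 1) * ((k : ℝ) - 2) * 2 ^ (k - 2) * esym n η k
      = -(1 / 4) * (((k : ℝ) - 2) * (-2) ^ k * esym n η k) := fun k hk => by
    obtain ⟨m, rfl⟩ := Nat.exists_eq_add_of_le (mem_Icc.1 hk).1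
    rw [show 3 + m - 1 = 2 + m by omega, show 3 + m - 2 = 1 + m by omega, neg_pow (2 : ℝ)]
    push_cast
    ring
  have hsplit := sum_range_add_sum_Ico (fun k => ((k : ℝ) - 2) * (-2) ^ k * esym n η k)
    (show 3 ≤ n + 1 by omega)
  rw [sum_range_card_sub_two_mul_neg_two_pow_mul_esym, Ico_add_one_right_eq_Icc] at hsplit
  norm_num [sum_range_succ, esym_zero, esym_one] at hsplit
  rw [sum_congr rfl hcoef, ← mul_sum]
  linarith [one_le_prod_add_leaveOneOutSum_add_sum hη hsum]
end
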